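/- Let K ≥ 2 and let η : {1,…,K} × {1,…,K} → (0,∞) satisfy: for every L ≥ 1 and all j_1,…,j_L ∈ {1,…,K}, the cyclic product η_{j_1→j_2} ⋯ η_{j_L→j_1} ≥ 1. Fix a base vertex b ∈ {1,…,K}, set edge weights w(k,ℓ) = log η_{k→ℓ}, and let d(ℓ) = min(b→ℓ) be the minimum weight over simple walks from b to ℓ (with d(b) = 0). Define θ ∈ ℝ^K by θ_ℓ = exp(d(ℓ)) / Σ_{j=1}^K exp(d(j)). Then θ ∈ Δ, all entries θ_ℓ are strictly positive, and θ_ℓ ≤ η_{k→ℓ} · θ_k for all k, ℓ ∈ {1,…,K}. -/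

import Mathlib

noncomputable section

/-- The weight of the walk `j 0, j 1, …, j m` for edge weights `w`. -/
def walkWeight (K : ℕ) (w : Fin K → Fin K → ℝ) (m : ℕ) (j : Fin (m + 1) → Fin K) : ℝ :=
  ∑ i : Fin m, w (j i.castSucc) (j i.succ)

/-- The minimum weight over simple walks (pairwise distinct vertices) from `a` to `b`. -/
def minWalk (K : ℕ) (w : Fin K → Fin K → ℝ) (a b : Fin K) : ℝ :=
  sInf {v : ℝ | ∃ (m : ℕ) (j : Fin (m + 1) → Fin K),
    j 0 = a ∧ j (Fin.last m) = b ∧ Function.Injective j ∧ v = walkWeight K w m j}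

/-! Let `j` be a minimum-weight simple walk from `b` to `k`. If `ℓ` lies on `j`, the prefix of `j`
up to `ℓ` is a simple walk to `ℓ`, and the remaining segment closed up by the edge `k → ℓ` is a
cycle, of nonnegative weight since the weights are logarithms of a cyclic product `≥ 1`. Otherwise
`j` extended by `ℓ` is a simple walk to `ℓ`. Either way `d ℓ ≤ d k + log η_{k→ℓ}`, and exponentiating
gives `θ ℓ ≤ η_{k→ℓ} θ k`. -/

-- `minWalk K w a b` is `sInf (simpleWalkWeights K w a b)` by definition.
def simpleWalkWeights (K : ℕ) (w : Fin K → Fin K → ℝ) (a b : Fin K) : Set ℝ :=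
  {v : ℝ | ∃ (m : ℕ) (j : Fin (m + 1) → Fin K),
    j 0 = a ∧ j (Fin.last m) = b ∧ Function.Injective j ∧ v = walkWeight K w m j}

section
variable {K : ℕ} (w : Fin K → Fin K → ℝ)

theorem simpleWalkWeights_finite (a b : Fin K) : (simpleWalkWeights K w a b).Finite := by
  refine ((Finset.range K).finite_toSet.biUnion fun m _ ↦
    Set.finite_range (walkWeight K w m)).subset ?_
  rintro v ⟨m, j, -, -, hj, rfl⟩
  have hmK : m + 1 ≤ K := by simpa using Fintype.card_le_of_injective j hj
  exact Set.mem_biUnion (by simpa using hmK) ⟨j, rfl⟩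

theorem simpleWalkWeights_nonempty (a b : Fin K) : (simpleWalkWeights K w a b).Nonempty := by
  by_cases hab : a = b
  · exact ⟨_, 0, fun _ ↦ a, rfl, hab, fun x y _ ↦ Subsingleton.elim (α := Fin 1) x y, rfl⟩
  · refine ⟨_, 1, ![a, b], rfl, rfl, ?_, rfl⟩
    intro x y hxy
    fin_cases x <;> fin_cases y <;> simp_all

theorem minWalk_le_walkWeight {a b : Fin K} {m : ℕ} {j : Fin (m + 1) → Fin K} (h0 : j 0 = a)
    (hm : j (Fin.last m) = b) (hj : Function.Injective j) : minWalk K w a b ≤ walkWeight K w m j :=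
  csInf_le (simpleWalkWeights_finite w a b).bddBelow ⟨m, j, h0, hm, hj, rfl⟩

theorem exists_walkWeight_eq_minWalk (a b : Fin K) :
    ∃ (m : ℕ) (j : Fin (m + 1) → Fin K), j 0 = a ∧ j (Fin.last m) = b ∧ Function.Injective j ∧
      minWalk K w a b = walkWeight K w m j :=
  (simpleWalkWeights_nonempty w a b).csInf_mem (simpleWalkWeights_finite w a b)

theorem walkWeight_snoc {m : ℕ} (j : Fin (m + 1) → Fin K) (x : Fin K) :
    walkWeight K w (m + 1) (Fin.snoc j x) = walkWeight K w m j + w (j (Fin.last m)) x := by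
  simp only [walkWeight, Fin.sum_univ_castSucc, Fin.succ_castSucc, Fin.snoc_castSucc, Fin.succ_last,
    Fin.snoc_last]

theorem walkWeight_split {m n L : ℕ} (j : Fin (m + 1) → Fin K) (h : n + L = m) :
    walkWeight K w m j = walkWeight K w n (fun t ↦ j (Fin.castLE (by omega) t)) +
      walkWeight K w L (fun t ↦ j ⟨n + t, by omega⟩) := by
  subst h
  exact Fin.sum_univ_add _

theorem sum_cycle_eq_walkWeight_add {L : ℕ} (c : Fin (L + 1) → Fin K) :
    ∑ i, w (c i) (c (i + 1)) = walkWeight K w L c + w (c (Fin.last L)) (c 0) := by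
  simp only [walkWeight, Fin.sum_univ_castSucc, Fin.coeSucc_eq_succ, Fin.last_add_one]

theorem minWalk_le_minWalk_add
    (hcyc : ∀ (L : ℕ) (c : Fin (L + 1) → Fin K), 0 ≤ ∑ i, w (c i) (c (i + 1))) (a k ℓ : Fin K) :
    minWalk K w a ℓ ≤ minWalk K w a k + w k ℓ := by
  obtain ⟨m, j, h0, hm, hj, hjk⟩ := exists_walkWeight_eq_minWalk w a k
  by_cases hℓ : ℓ ∈ Set.range j
  · obtain ⟨i, rfl⟩ := hℓ
    have hsplit := walkWeight_split w j (Nat.add_sub_of_le (Nat.lt_succ_iff.mp i.isLt))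
    set s : Fin (m - i + 1) → Fin K := fun t ↦ j ⟨i + t, by omega⟩
    have hcycle := sum_cycle_eq_walkWeight_add w s ▸ hcyc _ s
    have hs_last : s (Fin.last _) = k := by
      rw [← hm]
      exact congrArg j (Fin.ext (by simp only [Fin.val_last]; omega))
    have hs_zero : s 0 = j i := rfl
    rw [hs_last, hs_zero] at hcycle
    have hpre : minWalk K w a (j i) ≤ walkWeight K w i fun t ↦ j (Fin.castLE i.isLt t) :=
      minWalk_le_walkWeight w h0 rfl (hj.comp (Fin.castLE_injective i.isLt))
    linarith
  · rw [hjk, ← hm, ← walkWeight_snoc]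
    exact minWalk_le_walkWeight w (by simpa using h0) (by simp)
      (Fin.snoc_injective_of_injective hj hℓ)

end

theorem stmt9 (K : ℕ) (η : Fin K → Fin K → ℝ)
    (hpos : ∀ k ℓ, 0 < η k ℓ)
    (hcyc : ∀ (L : ℕ) (j : Fin (L + 1) → Fin K),
      1 ≤ ∏ i : Fin (L + 1), η (j i) (j (i + 1)))
    (b : Fin K) (d : Fin K → ℝ)
    (hd : ∀ ℓ, d ℓ = minWalk K (fun i j => Real.log (η i j)) b ℓ)
    (θ : Fin K → ℝ)
    (hθ : ∀ ℓ, θ ℓ = Real.exp (d ℓ) / ∑ j : Fin K, Real.exp (d j)) :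
    θ ∈ stdSimplex ℝ (Fin K) ∧ (∀ ℓ, 0 < θ ℓ) ∧ ∀ k ℓ, θ ℓ ≤ η k ℓ * θ k := by
  have hlog_cyc (L : ℕ) (c : Fin (L + 1) → Fin K) :
      0 ≤ ∑ i, Real.log (η (c i) (c (i + 1))) := by
    rw [← Real.log_prod fun i _ ↦ (hpos _ _).ne']
    exact Real.log_nonneg (hcyc L c)
  have hS : 0 < ∑ j, Real.exp (d j) :=
    Finset.sum_pos (fun j _ ↦ Real.exp_pos _) ⟨b, Finset.mem_univ _⟩
  have hθpos (ℓ : Fin K) : 0 < θ ℓ := hθ ℓ ▸ div_pos (Real.exp_pos _) hS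
  refine ⟨⟨fun ℓ ↦ (hθpos ℓ).le, ?_⟩, hθpos, fun k ℓ ↦ ?_⟩
  · simp_rw [hθ, ← Finset.sum_div, div_self hS.ne']
  · have hdist : d ℓ ≤ d k + Real.log (η k ℓ) := by
      rw [hd, hd]
      exact minWalk_le_minWalk_add _ hlog_cyc b k ℓ
    have hexp := Real.exp_le_exp.mpr hdist
    rw [Real.exp_add, Real.exp_log (hpos k ℓ)] at hexp
    rw [hθ, hθ, mul_div_assoc']
    gcongr
    linarith
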